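/- arXiv:math/9810070 — 4 statements merged into one kernel-verified Lean document; each statement's English description precedes it below -/
import Mathlib

section
/- If V is a partial isometry on H⊗H (VV*V = V) satisfying the pentagon equation V₂₃V₁₂ = V₁₂V₁₃V₂₃ and the relation V₁₃V₂₃V₂₃* = V₁₂*V₁₂V₁₃ on H⊗H⊗H, then V₁₂*V₂₃V₁₂ = V₁₃V₂₃. -/
open Matrix

namespace MPIpaper

variable {n : Type*} [Fintype n] [DecidableEq n]

noncomputable section

/-- `W₁₂ = W ⊗ 1` on `H ⊗ H ⊗ H`. -/
def leg12 (V : Matrix (n × n) (n × n) ℂ) : Matrix (n × n × n) (n × n × n) ℂ :=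
  Matrix.of fun p q => V (p.1, p.2.1) (q.1, q.2.1) * (if p.2.2 = q.2.2 then (1 : ℂ) else 0)

/-- `W₂₃ = 1 ⊗ W` on `H ⊗ H ⊗ H`. -/
def leg23 (V : Matrix (n × n) (n × n) ℂ) : Matrix (n × n × n) (n × n × n) ℂ :=
  Matrix.of fun p q => (if p.1 = q.1 then (1 : ℂ) else 0) * V p.2 q.2

/-- `W₁₃ = (1⊗Σ)(W⊗1)(1⊗Σ)` on `H ⊗ H ⊗ H`. -/
def leg13 (V : Matrix (n × n) (n × n) ℂ) : Matrix (n × n × n) (n × n × n) ℂ :=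
  Matrix.of fun p q => V (p.1, p.2.2) (q.1, q.2.2) * (if p.2.1 = q.2.1 then (1 : ℂ) else 0)

/-- A multiplicative partial isometry: `VV*V = V`, the pentagon equation, and the
three auxiliary (hexagon-type) equations. -/
def IsMPI (V : Matrix (n × n) (n × n) ℂ) : Prop :=
  V * Vᴴ * V = V ∧
  leg23 V * leg12 V = leg12 V * leg13 V * leg23 V ∧
  leg13 V * leg23 V * (leg23 V)ᴴ = (leg12 V)ᴴ * leg12 V * leg13 V ∧
  leg12 V * (leg12 V)ᴴ * leg23 V = leg23 V * leg12 V * (leg12 V)ᴴ ∧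
  leg12 V * (leg23 V)ᴴ * leg23 V = (leg23 V)ᴴ * leg23 V * leg12 V

/-- `λ(ω) = (ω ⊗ id)(V)`. -/
def lam (ω : Matrix n n ℂ →ₗ[ℂ] ℂ) (V : Matrix (n × n) (n × n) ℂ) : Matrix n n ℂ :=
  Matrix.of fun i j => ω (Matrix.of fun a b => V (a, i) (b, j))

/-- `ρ(ω) = (id ⊗ ω)(V)`. -/
def rho (ω : Matrix n n ℂ →ₗ[ℂ] ℂ) (V : Matrix (n × n) (n × n) ℂ) : Matrix n n ℂ :=
  Matrix.of fun i j => ω (Matrix.of fun a b => V (i, a) (j, b))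

/-- `1 ⊗ X` on `H ⊗ H`. -/
def oneTensor (X : Matrix n n ℂ) : Matrix (n × n) (n × n) ℂ :=
  Matrix.of fun p q => (if p.1 = q.1 then (1 : ℂ) else 0) * X p.2 q.2

/-- `X ⊗ 1` on `H ⊗ H`. -/
def tensorOne (X : Matrix n n ℂ) : Matrix (n × n) (n × n) ℂ :=
  Matrix.of fun p q => X p.1 q.1 * (if p.2 = q.2 then (1 : ℂ) else 0)

/-- `Δ(X) = V (X ⊗ 1) V*`. -/
def Delta (V : Matrix (n × n) (n × n) ℂ) (X : Matrix n n ℂ) : Matrix (n × n) (n × n) ℂ :=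
  V * tensorOne X * Vᴴ

/-- `Δ̂(X) = V* (1 ⊗ X) V`. -/
def hatDelta (V : Matrix (n × n) (n × n) ℂ) (X : Matrix n n ℂ) : Matrix (n × n) (n × n) ℂ :=
  Vᴴ * oneTensor X * V

/-- `(ω ⊗ ω')(W)` for an operator `W` on `H ⊗ H`. -/
def applyBoth (ω ω' : Matrix n n ℂ →ₗ[ℂ] ℂ) (W : Matrix (n × n) (n × n) ℂ) : ℂ :=
  ω (Matrix.of fun i j => ω' (Matrix.of fun k l => W (i, k) (j, l)))

end

lemma leg23_mul (A B : Matrix (n × n) (n × n) ℂ) :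
    leg23 (A * B) = leg23 A * leg23 B := by
  ext p q
  simp only [leg23, Matrix.mul_apply, Matrix.of_apply, Fintype.sum_prod_type]
  by_cases h : p.1 = q.1 <;>
    simp [h, ite_mul, mul_ite, mul_zero, zero_mul, Finset.sum_ite_eq, Finset.mul_sum]

lemma leg23_conj (A : Matrix (n × n) (n × n) ℂ) :
    (leg23 A)ᴴ = leg23 Aᴴ := by
  ext p q
  simp only [leg23, Matrix.conjTranspose_apply, Matrix.of_apply]
  by_cases h : q.1 = p.1
  · simp [h]
  · rw [if_neg h, if_neg (fun h' : p.1 = q.1 => h h'.symm)]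
    simp

theorem statement0 (V : Matrix (n × n) (n × n) ℂ)
    (hiso : V * Vᴴ * V = V)
    (hpenta : leg23 V * leg12 V = leg12 V * leg13 V * leg23 V)
    (hhexa1 : leg13 V * leg23 V * (leg23 V)ᴴ = (leg12 V)ᴴ * leg12 V * leg13 V) :
    (leg12 V)ᴴ * leg23 V * leg12 V = leg13 V * leg23 V := by
  have hiso23 : leg23 V * (leg23 V)ᴴ * leg23 V = leg23 V := by
    rw [leg23_conj, ← leg23_mul, ← leg23_mul, hiso]
  calc (leg12 V)ᴴ * leg23 V * leg12 V
      = (leg12 V)ᴴ * (leg23 V * leg12 V) := by rw [mul_assoc]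
    _ = (leg12 V)ᴴ * leg12 V * leg13 V * leg23 V := by
        rw [hpenta]; noncomm_ring
    _ = leg13 V * (leg23 V * (leg23 V)ᴴ * leg23 V) := by
        rw [← hhexa1]; noncomm_ring
    _ = leg13 V * leg23 V := by rw [hiso23]

end MPIpaper
end

section
/- If V is a multiplicative partial isometry, then V₁₂*V₂₃ = V₁₃V₂₃V₁₂*. -/
open Matrix

namespace MPIpaper

variable {n : Type*} [Fintype n] [DecidableEq n]

lemma leg12_mul (A B : Matrix (n × n) (n × n) ℂ) :
    leg12 (A * B) = leg12 A * leg12 B := by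
  ext ⟨i, j, k⟩ ⟨i', j', k'⟩
  simp [leg12, Matrix.mul_apply, Fintype.sum_prod_type, mul_ite, ite_mul,
    Finset.sum_ite_eq, Finset.sum_ite_eq', mul_comm, mul_left_comm, mul_assoc]

lemma leg12_conjTranspose (V : Matrix (n × n) (n × n) ℂ) :
    (leg12 V)ᴴ = leg12 Vᴴ := by
  ext ⟨i, j, k⟩ ⟨i', j', k'⟩
  simp only [leg12, Matrix.conjTranspose_apply, Matrix.of_apply, star_mul', apply_ite (star : ℂ → ℂ), star_one,
    star_zero]
  by_cases h : k = k' <;> simp [h, eq_comm, mul_comm]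

lemma leg23_conjTranspose (V : Matrix (n × n) (n × n) ℂ) :
    (leg23 V)ᴴ = leg23 Vᴴ := by
  ext ⟨i, j, k⟩ ⟨i', j', k'⟩
  simp only [leg23, Matrix.conjTranspose_apply, Matrix.of_apply, star_mul', apply_ite (star : ℂ → ℂ), star_one,
    star_zero]
  by_cases h : i = i' <;> simp [h, eq_comm, mul_comm]

theorem statement3 (V : Matrix (n × n) (n × n) ℂ) (hV : IsMPI V) :
    (leg12 V)ᴴ * leg23 V = leg13 V * leg23 V * (leg12 V)ᴴ := by
  obtain ⟨hpi, hP, hA, hB, _⟩ := hV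
  set A := leg12 V with hA12
  set B := leg23 V with hB23
  set C := leg13 V with hC13
  have h1 : A * Aᴴ * A = A := by
    rw [hA12, leg12_conjTranspose, ← leg12_mul, ← leg12_mul, hpi]
  have h2 : B * Bᴴ * B = B := by
    rw [hB23, leg23_conjTranspose, ← leg23_mul, ← leg23_mul, hpi]
  have h1' : Aᴴ * A * Aᴴ = Aᴴ := by
    have := congrArg Matrix.conjTranspose h1
    simpa [Matrix.conjTranspose_mul, mul_assoc] using this
  calc Aᴴ * B = Aᴴ * A * Aᴴ * B := by rw [h1']
    _ = Aᴴ * (A * Aᴴ * B) := by noncomm_ring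
    _ = Aᴴ * (B * A * Aᴴ) := by rw [hB]
    _ = Aᴴ * (B * A) * Aᴴ := by noncomm_ring
    _ = Aᴴ * (A * C * B) * Aᴴ := by rw [hP]
    _ = Aᴴ * A * C * (B * Aᴴ) := by noncomm_ring
    _ = C * B * Bᴴ * (B * Aᴴ) := by rw [← hA]
    _ = C * (B * Bᴴ * B) * Aᴴ := by noncomm_ring
    _ = C * B * Aᴴ := by rw [h2, mul_assoc]

end MPIpaper
end

section
/- On ℂ², with matrix units e_{ij}, the operator V = e₁₁⊗e₁₂ + e₂₂⊗e₂₂ on ℂ²⊗ℂ² is a multiplicative partial isometry (it satisfies VV*V = V, the pentagon equation, and the three hexagon-type relations), its left leg contains the identity operator, but its right leg does not contain the identity operator; in particular V is not unital. -/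
/-!
The matrix `V` has entries `0` and `1`: it is the image of a natural-number matrix `V₀` (`exVNat`), and
each of the five MPI identities is a polynomial identity in `V`, `V*` and the legs of `V`, all of
which are reindexed Kronecker products. So the identities can be checked for `V₀` over `ℕ`,
where they are decidable by evaluation.

The slice maps `ω ↦ (ω ⊗ id)(V)` and `ω ↦ (id ⊗ ω)(V)` are additive in `V` and send `A ⊗ B` to
`ω(A) B` and `ω(B) A`. Hence the leg `{(id ⊗ ω)(V)}` consists of the diagonal matrices
`ω(e₁₂) e₁₁ + ω(e₂₂) e₂₂` and contains `1`, whereas the other leg consists of the matrices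
`ω(e₁₁) e₁₂ + ω(e₂₂) e₂₂`, whose `(1,1)` entry vanishes. That excludes `1` from their span, and it
excludes a left unit `U` of that leg, since `(U e₁₂)₁₂ = U₁₁ = 0`.
-/

open Matrix

namespace MPIpaper

variable {n : Type*} [Fintype n] [DecidableEq n]

/-- `V` is unital: both legs contain two-sided units for themselves as algebras. -/
def Unital (V : Matrix (n × n) (n × n) ℂ) : Prop :=
  ∃ ε εhat : Matrix n n ℂ →ₗ[ℂ] ℂ,
    (∀ ω : Matrix n n ℂ →ₗ[ℂ] ℂ,
      lam εhat V * lam ω V = lam ω V ∧ lam ω V * lam εhat V = lam ω V) ∧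
    (∀ ω : Matrix n n ℂ →ₗ[ℂ] ℂ,
      rho ε V * rho ω V = rho ω V ∧ rho ω V * rho ε V = rho ω V)

/-- The non-unital example `V = e₁₁ ⊗ e₁₂ + e₂₂ ⊗ e₂₂` on `ℂ² ⊗ ℂ²`. -/
noncomputable def exV : Matrix (Fin 2 × Fin 2) (Fin 2 × Fin 2) ℂ :=
  Matrix.kroneckerMap (· * ·) (Matrix.single 0 0 (1 : ℂ)) (Matrix.single 0 1 (1 : ℂ)) +
  Matrix.kroneckerMap (· * ·) (Matrix.single 1 1 (1 : ℂ)) (Matrix.single 1 1 (1 : ℂ))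

open scoped Kronecker

section Legs

variable {ι R : Type*} [DecidableEq ι] [Semiring R] (φ : R →+* ℂ) (A : Matrix (ι × ι) (ι × ι) R)

theorem leg12_map :
    leg12 (A.map φ) =
      ((A ⊗ₖ 1).submatrix (Equiv.prodAssoc ι ι ι).symm (Equiv.prodAssoc ι ι ι).symm).map φ := by
  ext p q
  simp [leg12, one_apply, apply_ite φ]

theorem leg23_map : leg23 (A.map φ) = ((1 : Matrix ι ι R) ⊗ₖ A).map φ := by
  ext p q
  simp [leg23, one_apply, apply_ite φ]

theorem leg13_map :
    leg13 (A.map φ) =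
      ((A ⊗ₖ 1).submatrix (fun p : ι × ι × ι => ((p.1, p.2.2), p.2.1))
        (fun p => ((p.1, p.2.2), p.2.1))).map φ := by
  ext p q
  simp [leg13, one_apply, apply_ite φ]

end Legs

theorem conjTranspose_map_natCast {ι κ : Type*} (A : Matrix ι κ ℕ) :
    (A.map (Nat.castRingHom ℂ))ᴴ = Aᵀ.map (Nat.castRingHom ℂ) := by
  ext
  simp

theorem map_kronecker {ι R S : Type*} [Semiring R] [Semiring S] (f : R →+* S)
    (A B : Matrix ι ι R) : (A ⊗ₖ B).map f = A.map f ⊗ₖ B.map f :=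
  ext fun _ _ => map_mul f _ _

section Slices

variable {ι : Type*} (ω : Matrix ι ι ℂ →ₗ[ℂ] ℂ)

theorem lam_add (V W : Matrix (ι × ι) (ι × ι) ℂ) : lam ω (V + W) = lam ω V + lam ω W := by
  ext i j
  exact map_add ω (of _) (of _)

theorem lam_kronecker (A B : Matrix ι ι ℂ) : lam ω (A ⊗ₖ B) = ω A • B := by
  ext i j
  calc lam ω (A ⊗ₖ B) i j = ω (B i j • A) := congrArg ω (ext fun _ _ => mul_comm _ _)
    _ = (ω A • B) i j := by simp [mul_comm]

theorem rho_add (V W : Matrix (ι × ι) (ι × ι) ℂ) : rho ω (V + W) = rho ω V + rho ω W := by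
  ext i j
  exact map_add ω (of _) (of _)

theorem rho_kronecker (A B : Matrix ι ι ℂ) : rho ω (A ⊗ₖ B) = ω B • A := by
  ext i j
  calc rho ω (A ⊗ₖ B) i j = ω (A i j • B) := rfl
    _ = (ω B • A) i j := by simp [mul_comm]

end Slices

theorem one_notMem_span_of_forall_apply_eq_zero {ι R : Type*} [DecidableEq ι] [Semiring R]
    [Nontrivial R] {S : Set (Matrix ι ι R)} (i : ι) (hS : ∀ A ∈ S, A i i = 0) :
    (1 : Matrix ι ι R) ∉ Submodule.span R S := by
  intro h
  have hle : Submodule.span R S ≤ LinearMap.ker (entryLinearMap R R i i) :=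
    Submodule.span_le.2 hS
  simpa using hle h

theorem mul_single_ne_single_of_apply_eq_zero {ι R : Type*} [Fintype ι] [DecidableEq ι]
    [Semiring R] [Nontrivial R] {U : Matrix ι ι R} {i : ι} (hU : U i i = 0) (j : ι) :
    U * single i j 1 ≠ single i j 1 := by
  intro h
  simpa [hU] using congrFun (congrFun h i) j

def exVNat : Matrix (Fin 2 × Fin 2) (Fin 2 × Fin 2) ℕ :=
  single 0 0 1 ⊗ₖ single 0 1 1 + single 1 1 1 ⊗ₖ single 1 1 1

theorem exV_eq_map : exV = exVNat.map (Nat.castRingHom ℂ) := by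
  rw [exV, exVNat, Matrix.map_add _ (map_add _), map_kronecker, map_kronecker]
  simp only [map_single, map_one]

theorem isMPI_exV : IsMPI exV := by
  rw [exV_eq_map]
  refine ⟨?_, ?_, ?_, ?_, ?_⟩ <;>
    simp only [leg12_map, leg23_map, leg13_map, conjTranspose_map_natCast, ← Matrix.map_mul] <;>
    refine congrArg (Matrix.map · (Nat.castRingHom ℂ)) ?_ <;>
    decide

theorem lam_exV (ω : Matrix (Fin 2) (Fin 2) ℂ →ₗ[ℂ] ℂ) :
    lam ω exV = ω (single 0 0 1) • single 0 1 1 + ω (single 1 1 1) • single 1 1 1 := by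
  rw [exV, lam_add, lam_kronecker, lam_kronecker]

theorem rho_exV (ω : Matrix (Fin 2) (Fin 2) ℂ →ₗ[ℂ] ℂ) :
    rho ω exV = ω (single 0 1 1) • single 0 0 1 + ω (single 1 1 1) • single 1 1 1 := by
  rw [exV, rho_add, rho_kronecker, rho_kronecker]

theorem lam_exV_apply_zero_zero (ω : Matrix (Fin 2) (Fin 2) ℂ →ₗ[ℂ] ℂ) : lam ω exV 0 0 = 0 := by
  simp [lam_exV]

theorem one_mem_span_rho_exV :
    (1 : Matrix (Fin 2) (Fin 2) ℂ) ∈ Submodule.span ℂ (Set.range fun ω => rho ω exV) := by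
  have h : rho (entryLinearMap ℂ ℂ 0 1 + entryLinearMap ℂ ℂ 1 1) exV = 1 := by
    rw [rho_exV]
    ext i j
    fin_cases i <;> fin_cases j <;> simp
  exact h ▸ Submodule.subset_span ⟨_, rfl⟩

theorem one_notMem_span_lam_exV :
    (1 : Matrix (Fin 2) (Fin 2) ℂ) ∉ Submodule.span ℂ (Set.range fun ω => lam ω exV) :=
  one_notMem_span_of_forall_apply_eq_zero 0 (Set.forall_mem_range.2 lam_exV_apply_zero_zero)

theorem not_unital_exV : ¬ Unital exV := by
  rintro ⟨-, εhat, hlam, -⟩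
  have h : lam (entryLinearMap ℂ ℂ 0 0) exV = single 0 1 1 := by simp [lam_exV]
  exact mul_single_ne_single_of_apply_eq_zero (lam_exV_apply_zero_zero εhat) 1
    (h ▸ (hlam _).1)

theorem statement17 :
    IsMPI exV ∧
    (1 : Matrix (Fin 2) (Fin 2) ℂ) ∈
      Submodule.span ℂ (Set.range (fun ω : Matrix (Fin 2) (Fin 2) ℂ →ₗ[ℂ] ℂ => rho ω exV)) ∧
    (1 : Matrix (Fin 2) (Fin 2) ℂ) ∉
      Submodule.span ℂ (Set.range (fun ω : Matrix (Fin 2) (Fin 2) ℂ →ₗ[ℂ] ℂ => lam ω exV)) ∧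
    ¬ Unital exV := by
  exact ⟨isMPI_exV, one_mem_span_rho_exV, one_notMem_span_lam_exV, not_unital_exV⟩

end MPIpaper
end

section
/- Let V be a multiplicative partial isometry on H and define C(V) as the linear span of operators (id⊗ω)(ΣV) for ω ∈ L(H)*, where Σ is the flip on H⊗H. Then C(V) is a subalgebra of L(H). -/
open Matrix

namespace MPIpaper

variable {n : Type*} [Fintype n] [DecidableEq n]

/-- The flip operator `Σ` on `H ⊗ H`. -/
noncomputable def flipMat : Matrix (n × n) (n × n) ℂ :=
  Matrix.of fun p q => if p.1 = q.2 ∧ p.2 = q.1 then (1 : ℂ) else 0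

/-- `C(V) = span { (id ⊗ ω)(ΣV) | ω ∈ L(H)* }`. -/
noncomputable def CV (V : Matrix (n × n) (n × n) ℂ) : Submodule ℂ (Matrix n n ℂ) :=
  Submodule.span ℂ (Set.range (fun ω : Matrix n n ℂ →ₗ[ℂ] ℂ => rho ω (flipMat * V)))


lemma pentagon_entry (V : Matrix (n × n) (n × n) ℂ)
    (hp : leg23 V * leg12 V = leg12 V * leg13 V * leg23 V) (a' a i j b' b : n) :
    ∑ k, V (a,i) (k,b) * V (a',k) (j,b')
      = ∑ m2, ∑ p3, (∑ m1, V (a',a) (m1,m2) * V (m1,i) (j,p3)) * V (m2,p3) (b',b) := by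
  have h := congrFun (congrFun hp (a',a,i)) (j,b',b)
  simp only [Matrix.mul_apply, leg12, leg23, leg13, Matrix.of_apply, Fintype.sum_prod_type,
    ite_mul, mul_ite, one_mul, mul_one, zero_mul, mul_zero, Finset.sum_ite_eq,
    Finset.sum_ite_eq', Finset.mem_univ, if_true, Finset.sum_ite_irrel, Finset.sum_const_zero] at h
  exact h

lemma sum_mul_func (ω : Matrix n n ℂ →ₗ[ℂ] ℂ) (c : n → ℂ) (M : n → Matrix n n ℂ) :
    ω (Matrix.of fun a b => ∑ k, c k * M k a b) = ∑ k, c k * ω (M k) := by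
  have h : (Matrix.of fun a b => ∑ k, c k * M k a b) = ∑ k, c k • M k := by
    ext a b
    simp [Matrix.sum_apply]
  rw [h, map_sum]
  simp

lemma flip_mul_apply (V : Matrix (n × n) (n × n) ℂ) (a i j b : n) :
    ((flipMat : Matrix (n × n) (n × n) ℂ) * V) (i, a) (j, b) = V (a, i) (j, b) := by
  simp only [Matrix.mul_apply, flipMat, Matrix.of_apply, Fintype.sum_prod_type, ite_and,
    ite_mul, zero_mul, one_mul, Finset.sum_ite_eq, Finset.sum_ite_eq', Finset.mem_univ,
    if_true, Finset.sum_ite_irrel, Finset.sum_const_zero]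

lemma rho_flip (ω : Matrix n n ℂ →ₗ[ℂ] ℂ) (V : Matrix (n × n) (n × n) ℂ) (i j : n) :
    rho ω (flipMat * V) i j = ω (Matrix.of fun a b => V (a, i) (j, b)) := by
  simp only [rho, Matrix.of_apply]
  congr 1
  ext a b
  simp [flip_mul_apply]

noncomputable def prodFunc (V : Matrix (n × n) (n × n) ℂ)
    (ω ω' : Matrix n n ℂ →ₗ[ℂ] ℂ) : Matrix n n ℂ →ₗ[ℂ] ℂ where
  toFun X := ω' (Matrix.of fun a' b' => ω (Matrix.of fun a b =>
      ∑ m2, ∑ p3, (∑ m1, V (a', a) (m1, m2) * X m1 p3) * V (m2, p3) (b', b)))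
  map_add' X Y := by
    have outer : (Matrix.of fun a' b' => ω (Matrix.of fun a b =>
          ∑ m2, ∑ p3, (∑ m1, V (a', a) (m1, m2) * (X + Y) m1 p3) * V (m2, p3) (b', b)))
        = (Matrix.of fun a' b' => ω (Matrix.of fun a b =>
            ∑ m2, ∑ p3, (∑ m1, V (a', a) (m1, m2) * X m1 p3) * V (m2, p3) (b', b)))
          + (Matrix.of fun a' b' => ω (Matrix.of fun a b =>
            ∑ m2, ∑ p3, (∑ m1, V (a', a) (m1, m2) * Y m1 p3) * V (m2, p3) (b', b))) := by
      ext a' b'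
      rw [Matrix.add_apply, Matrix.of_apply, Matrix.of_apply, Matrix.of_apply, ← map_add]
      congr 1
      ext a b
      simp [Matrix.add_apply, mul_add, add_mul, Finset.sum_add_distrib]
    rw [outer, map_add]
  map_smul' c X := by
    have outer : (Matrix.of fun a' b' => ω (Matrix.of fun a b =>
          ∑ m2, ∑ p3, (∑ m1, V (a', a) (m1, m2) * (c • X) m1 p3) * V (m2, p3) (b', b)))
        = c • (Matrix.of fun a' b' => ω (Matrix.of fun a b =>
            ∑ m2, ∑ p3, (∑ m1, V (a', a) (m1, m2) * X m1 p3) * V (m2, p3) (b', b))) := by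
      ext a' b'
      rw [Matrix.smul_apply, Matrix.of_apply, Matrix.of_apply, ← _root_.map_smul]
      congr 1
      ext a b
      simp [Matrix.smul_apply, smul_eq_mul, Finset.mul_sum, Finset.sum_mul, mul_assoc,
        mul_left_comm]
    rw [outer, _root_.map_smul]
    rfl

lemma gen_mul (V : Matrix (n × n) (n × n) ℂ)
    (hp : leg23 V * leg12 V = leg12 V * leg13 V * leg23 V) (ω ω' : Matrix n n ℂ →ₗ[ℂ] ℂ) :
    rho ω (flipMat * V) * rho ω' (flipMat * V) = rho (prodFunc V ω ω') (flipMat * V) := by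
  ext i j
  rw [Matrix.mul_apply, rho_flip]
  simp only [rho_flip]
  rw [← sum_mul_func ω' (fun k => ω (Matrix.of fun a b => V (a, i) (k, b)))
        (fun k => Matrix.of fun a' b' => V (a', k) (j, b'))]
  show ω' _ = (prodFunc V ω ω') _
  simp only [prodFunc, LinearMap.coe_mk, AddHom.coe_mk]
  congr 1
  ext a' b'
  simp only [Matrix.of_apply]
  rw [show (∑ k, ω (Matrix.of fun a b => V (a, i) (k, b)) * V (a', k) (j, b'))
        = ∑ k, V (a', k) (j, b') * ω (Matrix.of fun a b => V (a, i) (k, b)) from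
      Finset.sum_congr rfl fun k _ => mul_comm _ _]
  rw [← sum_mul_func ω (fun k => V (a', k) (j, b'))
        (fun k => Matrix.of fun a b => V (a, i) (k, b))]
  congr 1
  ext a b
  simp only [Matrix.of_apply]
  rw [show (∑ k, V (a', k) (j, b') * V (a, i) (k, b))
        = ∑ k, V (a, i) (k, b) * V (a', k) (j, b') from
      Finset.sum_congr rfl fun k _ => mul_comm _ _]
  exact pentagon_entry V hp a' a i j b' b

theorem statement18 (V : Matrix (n × n) (n × n) ℂ) (hV : IsMPI V) :
    ∀ x ∈ CV V, ∀ y ∈ CV V, x * y ∈ CV V := by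
  have hp := hV.2.1
  intro x hx
  induction hx using Submodule.span_induction with
  | mem g hg =>
    intro y hy
    induction hy using Submodule.span_induction with
    | mem h hh =>
      obtain ⟨ω, rfl⟩ := hg
      obtain ⟨ω', rfl⟩ := hh
      rw [gen_mul V hp ω ω']
      exact Submodule.subset_span ⟨prodFunc V ω ω', rfl⟩
    | zero => rw [mul_zero]; exact zero_mem _
    | add y z _ _ hy hz => rw [mul_add]; exact add_mem hy hz
    | smul c y _ hy => rw [mul_smul_comm]; exact Submodule.smul_mem _ _ hy
  | zero => intro y hy; rw [zero_mul]; exact zero_mem _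
  | add x z _ _ hx hz => intro y hy; rw [add_mul]; exact add_mem (hx y hy) (hz y hy)
  | smul c x _ hx => intro y hy; rw [smul_mul_assoc]; exact Submodule.smul_mem _ _ (hx y hy)


end MPIpaper
end
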